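/- Let d ≥ 1 be an integer and let β ∈ (0, d). There exists a constant C > 0, depending only on d and β, such that for all t₁, t₂ > 0, all R > 0, and all ξ ∈ ℝ^d, ∫_{Q_R × Q_R} ∫_{ℝ^d} p_{t₁}(x₁ − ỹ) ‖ξ − ỹ‖^{−β} ‖x₂ − ỹ‖^{−β} dỹ dx₁ dx₂ ≤ C R^{2d−2β}. (This is the final reduction step in the proof of the bound on Φ^{(1)}: after integrating out the remaining Gaussian factors, the i = 1 case of Lemma A.3 reduces to this estimate.) -/

import Mathlib

open MeasureTheory

noncomputable def heatKernel (d : ℕ) (t : ℝ) (x : EuclideanSpace ℝ (Fin d)) : ℝ :=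
  (2 * Real.pi * t) ^ (-(d : ℝ) / 2) * Real.exp (-‖x‖ ^ 2 / (2 * t))

def box (d : ℕ) (R : ℝ) : Set (EuclideanSpace ℝ (Fin d)) :=
  {x | ∀ i, |x i| ≤ R}

/-!
By Tonelli, integrate `x₂` first: the Riesz kernel integrated over `Q_R` is at most `B R^(d-β)`,
uniformly in its centre. Substituting `y = x₁ - z` in what remains and integrating `x₁` next gives
the same bound for the box integral of `‖ξ + z - x₁‖^(-β)`, which is then averaged against the
heat kernel of total mass one; hence `C = B²`. The box bound is a layer-cake computation: the
level set `{‖a - y‖^(-β) > t}` is a ball of volume `∝ t^(-d/β)`, integrable at infinity since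
`β < d`, while for `t ≤ R^(-β)` its part in the box is bounded by the box volume `(2R)^d`.
-/

open ENNReal Metric Set Module

section Tonelli

variable {G : Type*} [AddCommGroup G] [MeasurableSpace G] [MeasurableAdd₂ G] [MeasurableNeg G]
  {μ : Measure G} [SFinite μ] [μ.IsAddLeftInvariant] [μ.IsNegInvariant]

theorem setLIntegral_setLIntegral_lintegral_mul_mul_le {φ g : G → ℝ≥0∞} (hφ : Measurable φ)
    (hg : Measurable g) (hg_neg : ∀ x, g (-x) = g x) (hφ_one : ∫⁻ x, φ x ∂μ = 1) {s : Set G}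
    {b : ℝ≥0∞} (hb : ∀ a, ∫⁻ x in s, g (x - a) ∂μ ≤ b) (ξ : G) :
    ∫⁻ x₁ in s, ∫⁻ x₂ in s, ∫⁻ y, φ (x₁ - y) * g (ξ - y) * g (x₂ - y) ∂μ ∂μ ∂μ ≤ b * b := by
  have inner (x₁ : G) : ∫⁻ x₂ in s, ∫⁻ y, φ (x₁ - y) * g (ξ - y) * g (x₂ - y) ∂μ ∂μ ≤
      (∫⁻ y, φ (x₁ - y) * g (ξ - y) ∂μ) * b := by
    rw [lintegral_lintegral_swap (by fun_prop), ← lintegral_mul_const _ (by fun_prop)]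
    refine lintegral_mono fun y => ?_
    rw [lintegral_const_mul _ (by fun_prop)]
    gcongr; exact hb y
  have outer : ∫⁻ x₁ in s, ∫⁻ y, φ (x₁ - y) * g (ξ - y) ∂μ ∂μ ≤ b :=
    calc ∫⁻ x₁ in s, ∫⁻ y, φ (x₁ - y) * g (ξ - y) ∂μ ∂μ
        = ∫⁻ x₁ in s, ∫⁻ z, φ z * g (x₁ - (ξ + z)) ∂μ ∂μ := by
          refine lintegral_congr fun x₁ => ?_
          rw [← lintegral_sub_left_eq_self _ x₁]
          congr! 3 with z
          · abel_nf
          · rw [← hg_neg]; abel_nf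
      _ = ∫⁻ z, φ z * ∫⁻ x₁ in s, g (x₁ - (ξ + z)) ∂μ ∂μ := by
          rw [lintegral_lintegral_swap (by fun_prop)]
          exact lintegral_congr fun z => lintegral_const_mul _ (by fun_prop)
      _ ≤ ∫⁻ z, φ z * b ∂μ := lintegral_mono fun z => by gcongr; exact hb _
      _ = b := by rw [lintegral_mul_const _ hφ, hφ_one, one_mul]
  calc _ ≤ ∫⁻ x₁ in s, (∫⁻ y, φ (x₁ - y) * g (ξ - y) ∂μ) * b ∂μ := lintegral_mono inner
    _ ≤ b * b := by
      rw [lintegral_mul_const _ (by fun_prop)]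
      gcongr

end Tonelli

section Riesz

variable {E : Type*} [NormedAddCommGroup E]

theorem setOf_lt_rpow_neg_norm_sub_subset_ball {β t : ℝ} (hβ : 0 < β) (ht : 0 < t) (a : E) :
    {y | t < ‖a - y‖ ^ (-β)} ⊆ ball a (t ^ (-β)⁻¹) := by
  intro y hy
  have hy0 : 0 < ‖a - y‖ := by
    refine (norm_nonneg _).lt_of_ne fun h => ?_
    simp only [mem_ofPred_eq, ← h, Real.zero_rpow (neg_ne_zero.2 hβ.ne')] at hy
    exact ht.not_gt hy
  rw [mem_ball, dist_comm, dist_eq_norm, Real.lt_rpow_inv_iff_of_neg hy0 ht (neg_neg_of_pos hβ)]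
  exact hy

variable [NormedSpace ℝ E] [FiniteDimensional ℝ E] [MeasurableSpace E] [BorelSpace E]
  (μ : Measure E) [μ.IsAddHaarMeasure]

theorem measure_setOf_lt_rpow_neg_norm_sub_le {β t : ℝ} (hβ : 0 < β) (ht : 0 < t) (a : E) :
    μ {y | t < ‖a - y‖ ^ (-β)} ≤ ENNReal.ofReal (t ^ (-(finrank ℝ E / β))) * μ (ball 0 1) := by
  calc μ {y | t < ‖a - y‖ ^ (-β)} ≤ μ (ball a (t ^ (-β)⁻¹)) :=
        measure_mono (setOf_lt_rpow_neg_norm_sub_subset_ball hβ ht a)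
    _ = _ := by
      rw [μ.addHaar_ball_of_pos a (Real.rpow_pos_of_pos ht _), ← Real.rpow_natCast,
        ← Real.rpow_mul ht.le]
      congr 3
      field_simp

theorem lintegral_Ioi_measure_setOf_lt_rpow_neg_norm_sub_le {β r : ℝ} (hβ : 0 < β)
    (hβd : β < finrank ℝ E) (hr : 0 < r) (a : E) :
    ∫⁻ t in Ioi (r ^ (-β)), μ {y | t < ‖a - y‖ ^ (-β)} ≤
      ENNReal.ofReal (μ.real (ball 0 1) * (β / (finrank ℝ E - β)) * r ^ (finrank ℝ E - β)) := by
  have hT : 0 < r ^ (-β) := Real.rpow_pos_of_pos hr _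
  have hdβ : 0 < (finrank ℝ E : ℝ) - β := sub_pos.2 hβd
  have hexp : -(finrank ℝ E / β) < -1 := by
    rw [neg_lt_neg_iff]; exact (one_lt_div hβ).2 hβd
  have htail : ∫ t in Ioi (r ^ (-β)), t ^ (-(finrank ℝ E / β)) =
      β / (finrank ℝ E - β) * r ^ (finrank ℝ E - β) := by
    rw [integral_Ioi_rpow_of_lt hexp hT, ← Real.rpow_mul hr.le,
      show -β * (-(finrank ℝ E / β) + 1) = finrank ℝ E - β by field_simp; ring,
      show -(finrank ℝ E / β) + 1 = -((finrank ℝ E - β) / β) by field_simp; ring]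
    field_simp
  calc ∫⁻ t in Ioi (r ^ (-β)), μ {y | t < ‖a - y‖ ^ (-β)}
      ≤ ∫⁻ t in Ioi (r ^ (-β)), ENNReal.ofReal (t ^ (-(finrank ℝ E / β))) * μ (ball 0 1) :=
        setLIntegral_mono' measurableSet_Ioi fun t ht =>
          measure_setOf_lt_rpow_neg_norm_sub_le μ hβ (hT.trans ht) a
    _ = ENNReal.ofReal (∫ t in Ioi (r ^ (-β)), t ^ (-(finrank ℝ E / β))) * μ (ball 0 1) := by
      rw [lintegral_mul_const' _ _ measure_ball_lt_top.ne,
        ofReal_integral_eq_lintegral_ofReal (integrableOn_Ioi_rpow_of_lt hexp hT)]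
      filter_upwards [ae_restrict_mem measurableSet_Ioi] with t ht
      exact Real.rpow_nonneg (hT.trans ht).le _
    _ = _ := by
      rw [htail, ← ofReal_measureReal measure_ball_lt_top.ne,
        ← ENNReal.ofReal_mul (by positivity)]
      ring_nf

theorem setLIntegral_rpow_neg_norm_sub_le {β r : ℝ} (hβ : 0 < β) (hβd : β < finrank ℝ E)
    (hr : 0 < r) (a : E) (s : Set E) :
    ∫⁻ y in s, ENNReal.ofReal (‖a - y‖ ^ (-β)) ∂μ ≤ ENNReal.ofReal (r ^ (-β)) * μ s +
      ENNReal.ofReal (μ.real (ball 0 1) * (β / (finrank ℝ E - β)) * r ^ (finrank ℝ E - β)) := by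
  have hT : 0 ≤ r ^ (-β) := Real.rpow_nonneg hr.le _
  rw [lintegral_eq_lintegral_meas_lt _ (.of_forall fun y => Real.rpow_nonneg (norm_nonneg _) _)
      (by fun_prop), ← Ioc_union_Ioi_eq_Ioi hT, lintegral_union measurableSet_Ioi
      (Ioc_disjoint_Ioi le_rfl)]
  gcongr
  · calc ∫⁻ t in Ioc 0 (r ^ (-β)), μ.restrict s {y | t < ‖a - y‖ ^ (-β)}
        ≤ ∫⁻ t in Ioc 0 (r ^ (-β)), μ s :=
          lintegral_mono fun t => (measure_mono (subset_univ _)).trans_eq (μ.restrict_apply_univ s)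
      _ = ENNReal.ofReal (r ^ (-β)) * μ s := by
          rw [setLIntegral_const, Real.volume_Ioc, sub_zero, mul_comm]
  · exact (lintegral_mono fun t => μ.restrict_le_self _).trans
      (lintegral_Ioi_measure_setOf_lt_rpow_neg_norm_sub_le μ hβ hβd hr a)

end Riesz

theorem heatKernel_nonneg (d : ℕ) {t : ℝ} (ht : 0 ≤ t) (x : EuclideanSpace ℝ (Fin d)) :
    0 ≤ heatKernel d t x := by
  unfold heatKernel; positivity

theorem measurable_heatKernel (d : ℕ) (t : ℝ) : Measurable (heatKernel d t) := by
  unfold heatKernel; fun_prop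

theorem integral_heatKernel (d : ℕ) {t : ℝ} (ht : 0 < t) :
    ∫ x, heatKernel d t x = 1 := by
  have hb : 0 < (2 * t)⁻¹ := by positivity
  have harg (x : EuclideanSpace ℝ (Fin d)) : -‖x‖ ^ 2 / (2 * t) = -(2 * t)⁻¹ * ‖x‖ ^ 2 := by
    ring
  simp only [heatKernel, harg]
  rw [integral_const_mul, GaussianFourier.integral_rexp_neg_mul_sq_norm hb,
    finrank_euclideanSpace_fin, div_inv_eq_mul,
    show Real.pi * (2 * t) = 2 * Real.pi * t by ring, ← Real.rpow_add (by positivity), neg_div,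
    neg_add_cancel, Real.rpow_zero]

theorem lintegral_heatKernel (d : ℕ) {t : ℝ} (ht : 0 < t) :
    ∫⁻ x, ENNReal.ofReal (heatKernel d t x) = 1 := by
  rw [← ofReal_integral_eq_lintegral_ofReal
    (integrable_of_integral_eq_one (integral_heatKernel d ht))
    (.of_forall (heatKernel_nonneg d ht.le)), integral_heatKernel d ht, ENNReal.ofReal_one]

theorem box_eq_preimage (d : ℕ) (R : ℝ) :
    box d R = (MeasurableEquiv.toLp 2 (Fin d → ℝ)).symm ⁻¹' Icc (fun _ => -R) fun _ => R := by
  ext x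
  simp [box, abs_le, Pi.le_def, forall_and]

theorem volume_box (d : ℕ) {R : ℝ} (hR : 0 ≤ R) :
    volume (box d R) = ENNReal.ofReal ((2 * R) ^ d) := by
  rw [box_eq_preimage,
    (EuclideanSpace.volume_preserving_symm_measurableEquiv_toLp (Fin d)).measure_preimage
      measurableSet_Icc.nullMeasurableSet, Real.volume_Icc_pi]
  simp [← ENNReal.ofReal_pow (by linarith : 0 ≤ R + R), two_mul]

theorem exists_setLIntegral_box_rpow_neg_norm_sub_le {d : ℕ} {β : ℝ} (hβ : 0 < β)
    (hβd : β < d) :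
    ∃ B > 0, ∀ R > 0, ∀ a : EuclideanSpace ℝ (Fin d),
      ∫⁻ x in box d R, ENNReal.ofReal (‖x - a‖ ^ (-β)) ≤
        ENNReal.ofReal (B * R ^ ((d : ℝ) - β)) := by
  set c := volume.real (ball (0 : EuclideanSpace ℝ (Fin d)) 1) * (β / (d - β))
  refine ⟨2 ^ d + c, by positivity, fun R hR a => ?_⟩
  have hlayer := setLIntegral_rpow_neg_norm_sub_le volume hβ
    (by rwa [finrank_euclideanSpace_fin]) hR a (box d R)
  rw [finrank_euclideanSpace_fin, volume_box d hR.le] at hlayer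
  simp_rw [norm_sub_rev _ a]
  refine hlayer.trans_eq ?_
  rw [← ENNReal.ofReal_mul (Real.rpow_nonneg hR.le _),
    ← ENNReal.ofReal_add (by positivity) (by positivity), sub_eq_add_neg, Real.rpow_add hR,
    Real.rpow_natCast, mul_pow]
  simp only [c]
  ring_nf

theorem stmt_12_general (d : ℕ) (β : ℝ) (hβ0 : 0 < β) (hβd : β < d) :
    ∃ C : ℝ, 0 < C ∧ ∀ t₁ t₂ : ℝ, 0 < t₁ → 0 < t₂ → ∀ R : ℝ, 0 < R →
      ∀ ξ : EuclideanSpace ℝ (Fin d),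
      (∫ x₁ in box d R, ∫ x₂ in box d R,
          ∫ ytil : EuclideanSpace ℝ (Fin d),
            heatKernel d t₁ (x₁ - ytil) * ‖ξ - ytil‖ ^ (-β) * ‖x₂ - ytil‖ ^ (-β)) ≤
        C * R ^ (2 * (d : ℝ) - 2 * β) := by
  obtain ⟨B, hB, hbox⟩ := exists_setLIntegral_box_rpow_neg_norm_sub_le hβ0 hβd
  refine ⟨B ^ 2, by positivity, fun t₁ _ ht₁ _ R hR ξ => ?_⟩
  have hbound := setLIntegral_setLIntegral_lintegral_mul_mul_le
    (measurable_heatKernel d t₁).ennreal_ofReal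
    (by fun_prop : Measurable fun x : EuclideanSpace ℝ (Fin d) => ENNReal.ofReal (‖x‖ ^ (-β)))
    (fun x => by rw [norm_neg]) (lintegral_heatKernel d ht₁) (hbox R hR) ξ
  refine (Real.le_norm_self _).trans ?_
  rw [← toReal_enorm]
  refine ENNReal.toReal_le_of_le_ofReal (by positivity) ?_
  calc _ ≤ ∫⁻ x₁ in box d R, ∫⁻ x₂ in box d R, ∫⁻ y, ENNReal.ofReal (heatKernel d t₁ (x₁ - y)) *
          ENNReal.ofReal (‖ξ - y‖ ^ (-β)) * ENNReal.ofReal (‖x₂ - y‖ ^ (-β)) := by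
        refine (enorm_integral_le_lintegral_enorm _).trans (lintegral_mono fun x₁ => ?_)
        refine (enorm_integral_le_lintegral_enorm _).trans (lintegral_mono fun x₂ => ?_)
        refine (enorm_integral_le_lintegral_enorm _).trans_eq (lintegral_congr fun y => ?_)
        rw [enorm_mul, enorm_mul, Real.enorm_eq_ofReal (heatKernel_nonneg d ht₁.le _),
          Real.enorm_eq_ofReal (Real.rpow_nonneg (norm_nonneg _) _),
          Real.enorm_eq_ofReal (Real.rpow_nonneg (norm_nonneg _) _)]
    _ ≤ _ := hbound
    _ = _ := by
        rw [← ENNReal.ofReal_mul (by positivity),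
          show 2 * (d : ℝ) - 2 * β = (d - β) + (d - β) by ring, Real.rpow_add hR]
        ring_nf

theorem stmt_12 (d : ℕ) (hd : 1 ≤ d) (β : ℝ) (hβ0 : 0 < β) (hβd : β < d) :
    ∃ C : ℝ, 0 < C ∧ ∀ t₁ t₂ : ℝ, 0 < t₁ → 0 < t₂ → ∀ R : ℝ, 0 < R →
      ∀ ξ : EuclideanSpace ℝ (Fin d),
      (∫ x₁ in box d R, ∫ x₂ in box d R,
          ∫ ytil : EuclideanSpace ℝ (Fin d),
            heatKernel d t₁ (x₁ - ytil) * ‖ξ - ytil‖ ^ (-β) * ‖x₂ - ytil‖ ^ (-β)) ≤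
        C * R ^ (2 * (d : ℝ) - 2 * β) :=
  stmt_12_general d β hβ0 hβd
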